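/- Let n ≥ p ≥ 2 and m ≥ 3. Set a = p(p−1)/2, c = (n−p)p, d = p(p+1)/2 (so a + c + d = np), let D = diag(I_a, 2·I_{np−a}) and L = diag(−I_a, −2·I_c, O_d) be np×np diagonal matrices, let M be the (m−2)×(m−2) matrix with M[i,j] = 1 if |i−j| = 1 and 0 otherwise, and let A = 2·I_{m−2}⊗D + M⊗L. Then A is symmetric, its smallest eigenvalue equals 2 − 2·cos(π/(m−1)), and in particular A is positive definite; that is, vᵀ·A·v ≥ (2 − 2·cos(π/(m−1)))·‖v‖² for every v ∈ ℝ^{(m−2)np}, with equality attained for some nonzero v. -/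

import Mathlib

open Matrix Real
open scoped Kronecker

/-- The `N×N` tridiagonal Toeplitz matrix with zero diagonal and ones on the sub- and
super-diagonals. -/
def triToeplitz (N : ℕ) : Matrix (Fin N) (Fin N) ℝ :=
  fun i j => if (i : ℕ) = (j : ℕ) + 1 ∨ (j : ℕ) = (i : ℕ) + 1 then 1 else 0

/-- `D = diag(I_a, 2I_{np−a})` with `a = p(p−1)/2`. -/
def Dmat (n p : ℕ) : Matrix (Fin (n * p)) (Fin (n * p)) ℝ :=
  Matrix.diagonal (fun i => if (i : ℕ) < p * (p - 1) / 2 then (1 : ℝ) else 2)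

/-- `L = diag(−I_a, −2I_c, O_d)` with `a = p(p−1)/2`, `c = (n−p)p`, `d = p(p+1)/2`. -/
def Lmat (n p : ℕ) : Matrix (Fin (n * p)) (Fin (n * p)) ℝ :=
  Matrix.diagonal (fun i =>
    if (i : ℕ) < p * (p - 1) / 2 then (-1 : ℝ)
    else if (i : ℕ) < p * (p - 1) / 2 + (n - p) * p then -2 else 0)

/-!
Write `v` by columns `x k = v (·, k)`. The quadratic form of `A` splits as
`∑ k, (2 dₖ ‖x k‖² + lₖ ⟪x k, M x k⟫)`, where `dₖ`, `lₖ ≤ 0` are the diagonal entries of `D`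
and `L`. With `θ = π / (m - 1)`, a discrete Picone identity writes `2 cos θ ‖x‖² - ⟪x, M x⟫` as a
sum of squares weighted by the positive numbers `sin (j θ)`, `1 ≤ j ≤ m - 2`, and these squares
vanish at `x i = sin ((i + 1) θ)`. Hence every column contributes at least
`(2 dₖ + 2 lₖ cos θ) ‖x k‖² ≥ (2 - 2 cos θ) ‖x k‖²`, and in the first `a` columns, where
`(dₖ, lₖ) = (1, -1)`, the sine vector attains this bound.
-/

open Finset

theorem discrete_picone_identity {R : Type*} [Field R] {K : ℕ} {c : R} {s F : ℕ → R}
    (hs₀ : s 0 = 0) (hs : s (K + 2) = 0)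
    (hs_ne : ∀ j, 1 ≤ j → j ≤ K + 1 → s j ≠ 0) (hrec : ∀ j, s (j + 2) + s j = c * s (j + 1))
    (hF : F (K + 1) = 0) :
    c * ∑ i ∈ range (K + 1), F i ^ 2 - 2 * ∑ i ∈ range (K + 1), F i * F (i + 1) =
      ∑ i ∈ range K, (s (i + 2) * F i - s (i + 1) * F (i + 1)) ^ 2 / (s (i + 1) * s (i + 2)) := by
  have hterm : ∀ i ∈ range K,
      (s (i + 2) * F i - s (i + 1) * F (i + 1)) ^ 2 / (s (i + 1) * s (i + 2)) =
        s (i + 2) / s (i + 1) * F i ^ 2 + s (i + 1) / s (i + 2) * F (i + 1) ^ 2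
          - 2 * (F i * F (i + 1)) := by
    intro i hi
    have hiK := mem_range.1 hi
    have h₁ := hs_ne (i + 1) (by omega) (by omega)
    have h₂ := hs_ne (i + 2) (by omega) (by omega)
    field_simp
    ring
  have hleft : ∑ i ∈ range K, s (i + 2) / s (i + 1) * F i ^ 2 =
      ∑ i ∈ range (K + 1), s (i + 2) / s (i + 1) * F i ^ 2 := by
    simp [sum_range_succ, hs]
  have hright : ∑ i ∈ range K, s (i + 1) / s (i + 2) * F (i + 1) ^ 2 =
      ∑ i ∈ range (K + 1), s i / s (i + 1) * F i ^ 2 := by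
    simp [sum_range_succ', hs₀]
  have hmixed : ∑ i ∈ range K, 2 * (F i * F (i + 1)) =
      ∑ i ∈ range (K + 1), 2 * (F i * F (i + 1)) := by
    simp [sum_range_succ, hF]
  have hdiag : ∀ i ∈ range (K + 1),
      s (i + 2) / s (i + 1) * F i ^ 2 + s i / s (i + 1) * F i ^ 2 = c * F i ^ 2 := by
    intro i hi
    have h₁ := hs_ne (i + 1) (by omega) (by have := mem_range.1 hi; omega)
    rw [← add_mul, ← add_div, hrec, mul_div_cancel_right₀ _ h₁]
  rw [sum_congr rfl hterm, sum_sub_distrib, sum_add_distrib, hleft, hright, hmixed,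
    ← sum_add_distrib, sum_congr rfl hdiag, mul_sum, mul_sum]

theorem sin_mul_pi_div_pos {x N : ℝ} (hx : 0 < x) (hxN : x < N) : 0 < sin (x * π / N) := by
  have hN : 0 < N := hx.trans hxN
  apply sin_pos_of_pos_of_lt_pi (by positivity)
  rw [div_lt_iff₀ hN, mul_comm]
  gcongr

theorem cos_pi_div_nat_add_one_lt_one (N : ℕ) : cos (π / (N + 1)) < 1 := by
  have hle : π / (N + 1) ≤ π := div_le_self pi_pos.le (by linarith [N.cast_nonneg (α := ℝ)])
  simpa using cos_lt_cos_of_nonneg_of_le_pi le_rfl hle (by positivity)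

theorem sin_add_two_mul_add_sin (x θ : ℝ) :
    sin (x + 2 * θ) + sin x = 2 * cos θ * sin (x + θ) := by
  have h := sin_sub (x + θ) θ
  rw [add_sub_cancel_right] at h
  rw [show x + 2 * θ = x + θ + θ by ring, sin_add, h]
  ring

def extendByZero {α : Type*} [Zero α] {N : ℕ} (x : Fin N → α) (i : ℕ) : α :=
  if h : i < N then x ⟨i, h⟩ else 0

section extendByZero

variable {α : Type*} [Zero α] {N : ℕ} (x : Fin N → α)

@[simp]
theorem extendByZero_val (i : Fin N) : extendByZero x i = x i := by
  simp [extendByZero]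

theorem extendByZero_of_lt {i : ℕ} (h : i < N) : extendByZero x i = x ⟨i, h⟩ := by
  simp [extendByZero, h]

theorem extendByZero_of_le {i : ℕ} (h : N ≤ i) : extendByZero x i = 0 := by
  simp [extendByZero, h]

end extendByZero

theorem sum_ite_val_eq_extendByZero {α : Type*} [AddCommMonoid α] {N : ℕ} (x : Fin N → α)
    (k : ℕ) : ∑ j : Fin N, (if (j : ℕ) = k then x j else 0) = extendByZero x k := by
  by_cases hk : k < N
  · have hj : ∀ j : Fin N, (j : ℕ) = k ↔ j = ⟨k, hk⟩ := fun j => by rw [Fin.ext_iff]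
    simp only [hj, sum_ite_eq', mem_univ, if_true, extendByZero, dif_pos hk]
  · rw [extendByZero_of_le x (not_lt.1 hk)]
    exact sum_eq_zero fun j _ => if_neg (by omega)

theorem dotProduct_self_eq_sum_range_extendByZero {N : ℕ} (x : Fin N → ℝ) :
    x ⬝ᵥ x = ∑ i ∈ range N, extendByZero x i ^ 2 := by
  rw [dotProduct, ← Fin.sum_univ_eq_sum_range (fun i => extendByZero x i ^ 2)]
  simp [sq]

theorem triToeplitz_isSymm (N : ℕ) : (triToeplitz N).IsSymm :=
  IsSymm.ext fun _ _ => if_congr or_comm rfl rfl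

theorem dotProduct_triToeplitz_mulVec {N : ℕ} (x : Fin N → ℝ) :
    x ⬝ᵥ triToeplitz N *ᵥ x = 2 * ∑ i ∈ range N, extendByZero x i * extendByZero x (i + 1) := by
  set S : Matrix (Fin N) (Fin N) ℝ := of fun i j => if (j : ℕ) = i + 1 then 1 else 0
  have hM : triToeplitz N = S + Sᵀ := by
    ext i j
    simp only [triToeplitz, S, Matrix.add_apply, transpose_apply, of_apply]
    split_ifs <;> first | omega | norm_num
  have hS : S *ᵥ x = fun i : Fin N => extendByZero x ((i : ℕ) + 1) := by
    ext i
    simp only [mulVec, dotProduct, S, of_apply, ite_mul, one_mul, zero_mul]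
    exact sum_ite_val_eq_extendByZero x _
  have hSt : x ⬝ᵥ Sᵀ *ᵥ x = x ⬝ᵥ S *ᵥ x := by
    rw [dotProduct_mulVec, vecMul_transpose, dotProduct_comm]
  rw [hM, add_mulVec, dotProduct_add, hSt, ← two_mul, hS, dotProduct,
    ← Fin.sum_univ_eq_sum_range (fun i => extendByZero x i * extendByZero x (i + 1))]
  simp

theorem two_cos_mul_dotProduct_sub_dotProduct_triToeplitz_mulVec (K : ℕ) (x : Fin (K + 1) → ℝ) :
    2 * cos (π / (K + 2)) * (x ⬝ᵥ x) - x ⬝ᵥ triToeplitz (K + 1) *ᵥ x =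
      ∑ i ∈ range K, (sin ((i + 2) * π / (K + 2)) * extendByZero x i
          - sin ((i + 1) * π / (K + 2)) * extendByZero x (i + 1)) ^ 2
        / (sin ((i + 1) * π / (K + 2)) * sin ((i + 2) * π / (K + 2))) := by
  have hK : (0 : ℝ) < K + 2 := by positivity
  have hs : sin (((K + 2 : ℕ) : ℝ) * π / (K + 2)) = 0 := by
    push_cast
    rw [mul_div_cancel_left₀ _ hK.ne', sin_pi]
  have hs_ne : ∀ j : ℕ, 1 ≤ j → j ≤ K + 1 → sin (j * π / (K + 2)) ≠ 0 := fun j h₁ h₂ =>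
    (sin_mul_pi_div_pos (by exact_mod_cast h₁) (by norm_cast; omega)).ne'
  have hrec : ∀ j : ℕ, sin (((j + 2 : ℕ) : ℝ) * π / (K + 2)) + sin (j * π / (K + 2)) =
      2 * cos (π / (K + 2)) * sin (((j + 1 : ℕ) : ℝ) * π / (K + 2)) := fun j => by
    rw [show ((j + 2 : ℕ) : ℝ) * π / (K + 2) = j * π / (K + 2) + 2 * (π / (K + 2)) by
        push_cast; ring,
      show ((j + 1 : ℕ) : ℝ) * π / (K + 2) = j * π / (K + 2) + π / (K + 2) by push_cast; ring]
    exact sin_add_two_mul_add_sin _ _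
  have h := discrete_picone_identity (s := fun j : ℕ => sin (j * π / (K + 2))) (by simp) hs
    hs_ne hrec (extendByZero_of_le x le_rfl)
  push_cast at h
  rw [dotProduct_triToeplitz_mulVec, dotProduct_self_eq_sum_range_extendByZero, ← h]

theorem dotProduct_triToeplitz_mulVec_le (N : ℕ) (x : Fin N → ℝ) :
    x ⬝ᵥ triToeplitz N *ᵥ x ≤ 2 * cos (π / (N + 1)) * (x ⬝ᵥ x) := by
  cases N with
  | zero => simp [dotProduct]
  | succ K =>
    rw [show ((K + 1 : ℕ) : ℝ) + 1 = K + 2 by push_cast; ring, ← sub_nonneg,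
      two_cos_mul_dotProduct_sub_dotProduct_triToeplitz_mulVec]
    refine sum_nonneg fun i hi => div_nonneg (sq_nonneg _) (mul_pos ?_ ?_).le
    all_goals
      apply sin_mul_pi_div_pos (by positivity)
      have := mem_range.1 hi
      norm_cast
      omega

noncomputable def sinVec (N : ℕ) : Fin N → ℝ := fun i => sin ((i + 1) * π / (N + 1))

theorem sinVec_ne_zero {N : ℕ} (hN : 0 < N) : sinVec N ≠ 0 := by
  intro h
  have hpos : 0 < sin (1 * π / (N + 1)) := sin_mul_pi_div_pos one_pos (by norm_cast; omega)
  rw [one_mul] at hpos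
  simpa [sinVec, hpos.ne'] using congrFun h ⟨0, hN⟩

theorem dotProduct_triToeplitz_mulVec_sinVec (N : ℕ) :
    sinVec N ⬝ᵥ triToeplitz N *ᵥ sinVec N = 2 * cos (π / (N + 1)) * (sinVec N ⬝ᵥ sinVec N) := by
  cases N with
  | zero => simp [dotProduct]
  | succ K =>
    rw [show ((K + 1 : ℕ) : ℝ) + 1 = K + 2 by push_cast; ring, eq_comm, ← sub_eq_zero,
      two_cos_mul_dotProduct_sub_dotProduct_triToeplitz_mulVec]
    refine sum_eq_zero fun i hi => ?_
    have := mem_range.1 hi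
    rw [extendByZero_of_lt _ (by omega), extendByZero_of_lt _ (by omega)]
    simp only [sinVec]
    push_cast
    ring_nf

theorem Matrix.IsSymm.kronecker {R ι κ : Type*} [Mul R] {A : Matrix ι ι R} {B : Matrix κ κ R}
    (hA : A.IsSymm) (hB : B.IsSymm) : (A ⊗ₖ B).IsSymm := by
  rw [IsSymm, ← kroneckerMap_transpose, hA.eq, hB.eq]

theorem Matrix.PosDef.of_isSymm_of_le_dotProduct_mulVec {ι : Type*} [Fintype ι]
    {A : Matrix ι ι ℝ} {c : ℝ} (hA : A.IsSymm) (hc : 0 < c)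
    (h : ∀ v, c * (v ⬝ᵥ v) ≤ v ⬝ᵥ A *ᵥ v) : A.PosDef :=
  .of_dotProduct_mulVec_pos (by rwa [IsHermitian, conjTranspose_eq_transpose_of_trivial])
    fun v hv => by simpa using (mul_pos hc (dotProduct_star_self_pos_iff.2 hv)).trans_le (h v)

section Kronecker

variable {R ι κ : Type*} [CommSemiring R] [Fintype ι] [Fintype κ]

theorem dotProduct_eq_sum_dotProduct_col (v w : ι × κ → R) :
    v ⬝ᵥ w = ∑ k, (fun i => v (i, k)) ⬝ᵥ fun i => w (i, k) := by
  simp only [dotProduct, Fintype.sum_prod_type]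
  exact sum_comm

theorem dotProduct_kronecker_diagonal_mulVec [DecidableEq κ] (M : Matrix ι ι R) (l : κ → R)
    (v : ι × κ → R) :
    v ⬝ᵥ (M ⊗ₖ diagonal l) *ᵥ v =
      ∑ k, l k * ((fun i => v (i, k)) ⬝ᵥ M *ᵥ fun i => v (i, k)) := by
  simp only [dotProduct, mulVec, kroneckerMap_apply, diagonal_apply, Fintype.sum_prod_type,
    mul_ite, mul_zero, ite_mul, zero_mul, sum_ite_eq, mem_univ, if_true, mul_sum]
  rw [sum_comm]
  exact sum_congr rfl fun k _ => sum_congr rfl fun i _ => sum_congr rfl fun j _ => by ring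

theorem dotProduct_smul_one_kronecker_add_kronecker_mulVec [DecidableEq ι] [DecidableEq κ]
    (a : R) (d l : κ → R) (M : Matrix ι ι R) (v : ι × κ → R) :
    v ⬝ᵥ (a • (1 ⊗ₖ diagonal d) + M ⊗ₖ diagonal l) *ᵥ v =
      ∑ k, (a * d k * ((fun i => v (i, k)) ⬝ᵥ fun i => v (i, k))
        + l k * ((fun i => v (i, k)) ⬝ᵥ M *ᵥ fun i => v (i, k))) := by
  rw [add_mulVec, dotProduct_add, smul_mulVec, dotProduct_smul,
    dotProduct_kronecker_diagonal_mulVec, dotProduct_kronecker_diagonal_mulVec, smul_eq_mul,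
    mul_sum, ← sum_add_distrib]
  simp only [one_mulVec, mul_assoc]

theorem dotProduct_smul_one_kronecker_add_kronecker_mulVec_of_col [DecidableEq ι]
    [DecidableEq κ] {M : Matrix ι ι R} {μ c a : R} {d l : κ → R} {x : ι → R}
    (hx : x ⬝ᵥ M *ᵥ x = μ * (x ⬝ᵥ x)) {k₀ : κ} (hc : a * d k₀ + μ * l k₀ = c)
    {v : ι × κ → R} (hv : ∀ i k, v (i, k) = if k = k₀ then x i else 0) :
    v ⬝ᵥ (a • (1 ⊗ₖ diagonal d) + M ⊗ₖ diagonal l) *ᵥ v = c * (v ⬝ᵥ v) := by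
  rw [dotProduct_smul_one_kronecker_add_kronecker_mulVec, dotProduct_eq_sum_dotProduct_col v v,
    mul_sum]
  refine sum_congr rfl fun k _ => ?_
  have hcol : (fun i => v (i, k)) = if k = k₀ then x else 0 := by
    ext i
    rw [hv]
    split_ifs <;> rfl
  rw [hcol]
  split_ifs with hk
  · rw [hx, ← hc, hk]
    ring
  · simp

end Kronecker

section OrderedKronecker

variable {R ι κ : Type*} [CommRing R] [LinearOrder R] [IsStrictOrderedRing R] [Fintype ι]
  [Fintype κ] [DecidableEq ι] [DecidableEq κ] {M : Matrix ι ι R} {μ c a : R} {d l : κ → R}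

theorem le_dotProduct_smul_one_kronecker_add_kronecker_mulVec
    (hM : ∀ x, x ⬝ᵥ M *ᵥ x ≤ μ * (x ⬝ᵥ x)) (hl : ∀ k, l k ≤ 0)
    (hc : ∀ k, c ≤ a * d k + μ * l k) (v : ι × κ → R) :
    c * (v ⬝ᵥ v) ≤ v ⬝ᵥ (a • (1 ⊗ₖ diagonal d) + M ⊗ₖ diagonal l) *ᵥ v := by
  rw [dotProduct_smul_one_kronecker_add_kronecker_mulVec, dotProduct_eq_sum_dotProduct_col v v,
    mul_sum]
  refine sum_le_sum fun k _ => ?_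
  set x : ι → R := fun i => v (i, k)
  have hx : 0 ≤ x ⬝ᵥ x := sum_nonneg fun i _ => mul_self_nonneg (x i)
  calc c * (x ⬝ᵥ x) ≤ (a * d k + μ * l k) * (x ⬝ᵥ x) := mul_le_mul_of_nonneg_right (hc k) hx
    _ = a * d k * (x ⬝ᵥ x) + l k * (μ * (x ⬝ᵥ x)) := by ring
    _ ≤ a * d k * (x ⬝ᵥ x) + l k * (x ⬝ᵥ M *ᵥ x) :=
      add_le_add_right (mul_le_mul_of_nonpos_left (hM x) (hl k)) _

end OrderedKronecker

/-- The matrix `A = 2·I_{m−2}⊗D + M⊗L` is symmetric, positive definite, and its smallest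
eigenvalue equals `2 − 2cos(π/(m−1))`. -/
theorem stmt13 (n p m : ℕ) (hp : 2 ≤ p) (hnp : p ≤ n) (hm : 3 ≤ m) :
    ((2 : ℝ) • ((1 : Matrix (Fin (m - 2)) (Fin (m - 2)) ℝ) ⊗ₖ Dmat n p)
        + triToeplitz (m - 2) ⊗ₖ Lmat n p).IsSymm ∧
    ((2 : ℝ) • ((1 : Matrix (Fin (m - 2)) (Fin (m - 2)) ℝ) ⊗ₖ Dmat n p)
        + triToeplitz (m - 2) ⊗ₖ Lmat n p).PosDef ∧
    (∀ v : Fin (m - 2) × Fin (n * p) → ℝ,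
      (2 - 2 * Real.cos (Real.pi / (m - 1))) * (v ⬝ᵥ v) ≤
        v ⬝ᵥ ((2 : ℝ) • ((1 : Matrix (Fin (m - 2)) (Fin (m - 2)) ℝ) ⊗ₖ Dmat n p)
            + triToeplitz (m - 2) ⊗ₖ Lmat n p).mulVec v) ∧
    (∃ v : Fin (m - 2) × Fin (n * p) → ℝ, v ≠ 0 ∧
      v ⬝ᵥ ((2 : ℝ) • ((1 : Matrix (Fin (m - 2)) (Fin (m - 2)) ℝ) ⊗ₖ Dmat n p)
            + triToeplitz (m - 2) ⊗ₖ Lmat n p).mulVec v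
        = (2 - 2 * Real.cos (Real.pi / (m - 1))) * (v ⬝ᵥ v)) := by
  have hm₁ : (m : ℝ) - 1 = ((m - 2 : ℕ) : ℝ) + 1 := by
    rw [Nat.cast_sub (by omega)]
    push_cast
    ring
  rw [hm₁]
  have hcos := cos_pi_div_nat_add_one_lt_one (m - 2)
  set θ := π / (((m - 2 : ℕ) : ℝ) + 1)
  set A := (2 : ℝ) • ((1 : Matrix (Fin (m - 2)) (Fin (m - 2)) ℝ) ⊗ₖ Dmat n p)
    + triToeplitz (m - 2) ⊗ₖ Lmat n p
  have hsymm : A.IsSymm :=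
    (isSymm_one.kronecker (isSymm_diagonal _)).smul 2 |>.add
      ((triToeplitz_isSymm _).kronecker (isSymm_diagonal _))
  have hlow : ∀ v, (2 - 2 * cos θ) * (v ⬝ᵥ v) ≤ v ⬝ᵥ A *ᵥ v :=
    le_dotProduct_smul_one_kronecker_add_kronecker_mulVec (dotProduct_triToeplitz_mulVec_le _)
      (fun _ => by split_ifs <;> norm_num)
      (fun _ => by split_ifs <;> linarith [neg_one_le_cos θ])
  have hk₀ : 0 < p * (p - 1) / 2 := Nat.div_pos (Nat.mul_le_mul hp (by omega : 1 ≤ p - 1)) two_pos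
  have hnp₀ : 0 < n * p := Nat.mul_pos (by omega) (by omega)
  refine ⟨hsymm, .of_isSymm_of_le_dotProduct_mulVec hsymm (by linarith) hlow, hlow,
    fun ik => if ik.2 = ⟨0, hnp₀⟩ then sinVec _ ik.1 else 0, ?_,
    dotProduct_smul_one_kronecker_add_kronecker_mulVec_of_col
      (dotProduct_triToeplitz_mulVec_sinVec _) ?_ fun _ _ => rfl⟩
  · intro h
    exact sinVec_ne_zero (N := m - 2) (by omega)
      (funext fun i => by simpa using congrFun h (i, ⟨0, hnp₀⟩))
  · simp only [hk₀, if_true]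
    ring
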